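/- Let x₀,…,x_N satisfy a forward CM_L model x_k = G_{k,k-1} x_{k-1} + G_{k,N} x_N + e_k (k ∈ [1,N-1]) with white noise, satisfying the reciprocality condition G_k⁻¹ G_{k,N} = G_{k+1,k}' G_{k+1}⁻¹ G_{k+1,N} for k ∈ [1,N-2]. Define e^R_k = G_k⁻¹ e_k - G_{k+1,k}' G_{k+1}⁻¹ e_{k+1} for k ∈ [1,N-2] and e^R_{N-1} = G_{N-1}⁻¹ e_{N-1}. Then for k ∈ [1,N-2]: (G_k⁻¹ + G_{k+1,k}' G_{k+1}⁻¹ G_{k+1,k}) x_k - G_k⁻¹ G_{k,k-1} x_{k-1} - G_{k+1,k}' G_{k+1}⁻¹ x_{k+1} = e^R_k (the x_N terms cancel), and G_{N-1}⁻¹ x_{N-1} - G_{N-1}⁻¹ G_{N-1,N-2} x_{N-2} - G_{N-1}⁻¹ G_{N-1,N} x_N = e^R_{N-1}; i.e., the sequence satisfies a reciprocal model of second-order (nearest-neighbor) form. -/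
import Mathlib


open Matrix MeasureTheory

/-- Square `d × d` real matrices (one block). -/
abbrev SqMat (d : ℕ) := Matrix (Fin d) (Fin d) ℝ

/-- Big `(N+1)d × (N+1)d` real matrices, viewed as `(N+1) × (N+1)` arrays of
`d × d` blocks. -/
abbrev BigMat (N d : ℕ) := Matrix (Fin (N+1) × Fin d) (Fin (N+1) × Fin d) ℝ

/-- The `(i,j)` block of a big matrix. -/
def blk {N d : ℕ} (A : BigMat N d) (i j : Fin (N+1)) : SqMat d :=
  fun a b => A (i, a) (j, b)

/-- Block diagonal big matrix with diagonal blocks `D 0, …, D N`. -/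
def bdiag (N d : ℕ) (D : ℕ → SqMat d) : BigMat N d :=
  fun p q => if (p.1 : ℕ) = (q.1 : ℕ) then D (p.1 : ℕ) p.2 q.2 else 0

/-- The block lower bidiagonal matrix `𝓜` of a forward Markov model: identity blocks
on the diagonal and block `-(T k) = -M_{k,k-1}` in position `(k, k-1)` for `k ∈ [1,N]`. -/
def lowerBidiag (N d : ℕ) (T : ℕ → SqMat d) : BigMat N d :=
  fun p q =>
    if (p.1 : ℕ) = (q.1 : ℕ) then (if p.2 = q.2 then 1 else 0)
    else if (q.1 : ℕ) + 1 = (p.1 : ℕ) then -(T (p.1 : ℕ) p.2 q.2) else 0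

/-- The block upper bidiagonal matrix `𝓜ᴮ` of a backward Markov model: identity blocks
on the diagonal and block `-(T k) = -Mᴮ_{k,k+1}` in position `(k, k+1)` for `k ∈ [0,N-1]`. -/
def upperBidiag (N d : ℕ) (T : ℕ → SqMat d) : BigMat N d :=
  fun p q =>
    if (p.1 : ℕ) = (q.1 : ℕ) then (if p.2 = q.2 then 1 else 0)
    else if (p.1 : ℕ) + 1 = (q.1 : ℕ) then -(T (p.1 : ℕ) p.2 q.2) else 0

/-- a sequence obeying a forward CM_L model
`x_k = G_{k,k-1} x_{k-1} + G_{k,N} x_N + e_k` (`k ∈ [1,N-1]`) satisfying the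
reciprocality condition `G_k⁻¹ G_{k,N} = G_{k+1,k}ᵀ G_{k+1}⁻¹ G_{k+1,N}`
(`k ∈ [1,N-2]`) also satisfies, with
`eᴿ_k = G_k⁻¹ e_k - G_{k+1,k}ᵀ G_{k+1}⁻¹ e_{k+1}` (`k ∈ [1,N-2]`) and
`eᴿ_{N-1} = G_{N-1}⁻¹ e_{N-1}`, the nearest-neighbor reciprocal model:
for `k ∈ [1,N-2]`,
`(G_k⁻¹ + G_{k+1,k}ᵀ G_{k+1}⁻¹ G_{k+1,k}) x_k - G_k⁻¹ G_{k,k-1} x_{k-1}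
  - G_{k+1,k}ᵀ G_{k+1}⁻¹ x_{k+1} = eᴿ_k` (the `x_N` terms cancel), and
`G_{N-1}⁻¹ x_{N-1} - G_{N-1}⁻¹ G_{N-1,N-2} x_{N-2} - G_{N-1}⁻¹ G_{N-1,N} x_N
  = eᴿ_{N-1}`. -/
theorem cml_satisfies_reciprocal_model {N d : ℕ} (hN : 2 ≤ N)
    (Gs Gn Gc : ℕ → SqMat d)
    (hGc : ∀ k ≤ N, (Gc k).PosDef)
    (x e eR : ℕ → Fin d → ℝ)
    (hmodel : ∀ k, 1 ≤ k → k ≤ N - 1 →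
      x k = (Gs k).mulVec (x (k-1)) + (Gn k).mulVec (x N) + e k)
    (hrecip : ∀ k, 1 ≤ k → k ≤ N - 2 →
      (Gc k)⁻¹ * Gn k = (Gs (k+1))ᵀ * (Gc (k+1))⁻¹ * Gn (k+1))
    (heR : ∀ k, 1 ≤ k → k ≤ N - 2 →
      eR k = ((Gc k)⁻¹).mulVec (e k) - ((Gs (k+1))ᵀ * (Gc (k+1))⁻¹).mulVec (e (k+1)))
    (heRN1 : eR (N-1) = ((Gc (N-1))⁻¹).mulVec (e (N-1))) :
    (∀ k, 1 ≤ k → k ≤ N - 2 →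
      ((Gc k)⁻¹ + (Gs (k+1))ᵀ * (Gc (k+1))⁻¹ * Gs (k+1)).mulVec (x k)
        - ((Gc k)⁻¹ * Gs k).mulVec (x (k-1))
        - ((Gs (k+1))ᵀ * (Gc (k+1))⁻¹).mulVec (x (k+1)) = eR k) ∧
    (((Gc (N-1))⁻¹).mulVec (x (N-1)) - ((Gc (N-1))⁻¹ * Gs (N-1)).mulVec (x (N-2))
        - ((Gc (N-1))⁻¹ * Gn (N-1)).mulVec (x N) = eR (N-1)) := by
  constructor
  · intro k hk1 hk2
    have hxk := hmodel k hk1 (by omega)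
    have hx1 := hmodel (k+1) (by omega) (by omega)
    have hr := hrecip k hk1 hk2
    have key : ((Gc k)⁻¹).mulVec ((Gn k).mulVec (x N))
        = ((Gs (k+1))ᵀ).mulVec (((Gc (k+1))⁻¹).mulVec ((Gn (k+1)).mulVec (x N))) := by
      rw [Matrix.mulVec_mulVec, Matrix.mulVec_mulVec, Matrix.mulVec_mulVec, hr,
        Matrix.mul_assoc]
    rw [heR k hk1 hk2, hxk, hx1]
    simp only [Matrix.add_mulVec, Matrix.mulVec_add, Matrix.mulVec_sub,
      ← Matrix.mulVec_mulVec]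
    rw [key]
    have h1 : k + 1 - 1 = k := by omega
    rw [h1, hxk]
    simp only [Matrix.mulVec_add]
    abel
  · have hx := hmodel (N-1) (by omega) le_rfl
    rw [heRN1, hx]
    have h2 : N - 1 - 1 = N - 2 := by omega
    rw [h2]
    simp only [Matrix.mulVec_add, ← Matrix.mulVec_mulVec]
    abel
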